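/- arXiv:1204.3186 — 2 statements merged into one kernel-verified Lean document; each statement's English description precedes it below -/
import Mathlib

section
/- Any mode m of the Poisson distribution of order k with k ≥ 2 satisfies m ≥ ⌊λk(k+1)/2⌋ − k(k+1)/2 + 1. -/
open scoped BigOperators
open Real

/-- The pmf of the Poisson distribution of order `k` with parameter `lam`,
indexed by `x : ℤ` (it vanishes for `x < 0`):
`f_k(x;λ) = Σ e^{-kλ} λ^{x₁+⋯+x_k}/(x₁!⋯x_k!)` summed over all `k`-tuples of
nonnegative integers with `x₁ + 2x₂ + ⋯ + k x_k = x`. -/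
noncomputable def poissonOrderK (k : ℕ) (lam : ℝ) (x : ℤ) : ℝ :=
  ∑' t : Fin k → ℕ,
    if ((∑ i : Fin k, ((i : ℕ) + 1) * t i : ℕ) : ℤ) = x then
      Real.exp (-(k * lam)) * lam ^ (∑ i : Fin k, t i) /
        ∏ i : Fin k, (Nat.factorial (t i) : ℝ)
    else 0

/-- The difference `Δ_x = P_x - P_{x-1}`. -/
noncomputable def deltaOrderK (k : ℕ) (lam : ℝ) (x : ℤ) : ℝ :=
  poissonOrderK k lam x - poissonOrderK k lam (x - 1)

/-!
Write `P_x` for the pmf, `Δ_x = P_x - P_{x-1}`, `K = k(k+1)/2` and `c_i = (i+1) + ⋯ + k`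
(`tailSum k i`), so `c_0 = K`. Raising one part of a tuple by one gives the recurrence
`x P_x = λ ∑_{j<k} (j+1) P_{x-j-1}`, which summation by parts turns into
`(λK - x) P_x = λ ∑_{i<k} c_i Δ_{x-i}`.

For `λ ≥ 1`, strong induction shows `Δ_x > 0` whenever `2 ≤ x ≤ max k (λK - K + 1)`.
For `x ≤ k` the recurrence writes `x Δ_x` as a nonnegative combination of earlier differences
containing `(λx - 1) Δ_0 = (λx - 1) P_0 > 0`. For `x > k`, `K` times the second identity at `x`
minus `K - 1` times it at `x - 1` writes `K x Δ_x` as a nonnegative combination of earlier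
differences (as `K c_{i+1} ≤ (K - 1) c_i`) containing `λk(K - 1) Δ_{x-k} > 0`.
Hence if `m + K ≤ λK`, i.e. `m < ⌊λK⌋ - K + 1`, then `P_m < P_{m+1}`
(or `P_0 < P_2` for `m = 0`), so `m` is not a mode.
-/

@[to_additive]
theorem prod_apply_update_mul {ι α M : Type*} [Fintype ι] [DecidableEq ι] [CommMonoid M]
    (f : ι → α → M) (t : ι → α) (i : ι) (v : α) :
    (∏ j, f j (Function.update t i v j)) * f i (t i) = (∏ j, f j (t j)) * f i v := by
  simp_rw [Function.apply_update f t i v]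
  rw [Finset.prod_update_of_mem (Finset.mem_univ i),
    ← Finset.mul_prod_erase _ _ (Finset.mem_univ i), Finset.sdiff_singleton_eq_erase]
  ac_rfl

theorem update_pred_succ {ι : Type*} [DecidableEq ι] {s : ι → ℕ} {i : ι} (h : s i ≠ 0) :
    Function.update (Function.update s i (s i - 1)) i (Function.update s i (s i - 1) i + 1)
      = s := by
  rw [Function.update_self, Function.update_idem, Nat.sub_add_cancel (Nat.one_le_iff_ne_zero.mpr h),
    Function.update_eq_self]

namespace PoissonOrderK

variable {k : ℕ} {lam : ℝ}

def weight (t : Fin k → ℕ) : ℕ := ∑ i : Fin k, ((i : ℕ) + 1) * t i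

noncomputable def mass (k : ℕ) (lam : ℝ) (t : Fin k → ℕ) : ℝ :=
  exp (-(k * lam)) * lam ^ (∑ i, t i) / ∏ i, ((t i).factorial : ℝ)

def fiber (k : ℕ) (x : ℤ) : Finset (Fin k → ℕ) :=
  {t ∈ Fintype.piFinset fun _ => Finset.range (x.toNat + 1) | (weight t : ℤ) = x}

theorem le_weight (t : Fin k → ℕ) (i : Fin k) : t i ≤ weight t :=
  calc t i ≤ ((i : ℕ) + 1) * t i := Nat.le_mul_of_pos_left _ i.val.succ_pos
    _ ≤ weight t := Finset.single_le_sum (f := fun j : Fin k => ((j : ℕ) + 1) * t j)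
      (fun _ _ => Nat.zero_le _) (Finset.mem_univ i)

theorem mem_fiber {x : ℤ} {t : Fin k → ℕ} : t ∈ fiber k x ↔ (weight t : ℤ) = x := by
  refine ⟨fun h => (Finset.mem_filter.mp h).2, fun h => Finset.mem_filter.mpr ⟨?_, h⟩⟩
  refine Fintype.mem_piFinset.mpr fun i => Finset.mem_range.mpr ?_
  have := le_weight t i
  omega

theorem mass_pos (hlam : 0 < lam) (t : Fin k → ℕ) : 0 < mass k lam t := by
  unfold mass
  positivity

theorem mass_nonneg (hlam : 0 ≤ lam) (t : Fin k → ℕ) : 0 ≤ mass k lam t := by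
  unfold mass
  positivity

theorem poissonOrderK_eq_sum_fiber (k : ℕ) (lam : ℝ) (x : ℤ) :
    poissonOrderK k lam x = ∑ t ∈ fiber k x, mass k lam t := by
  rw [poissonOrderK, tsum_eq_sum (s := fiber k x)]
  · exact Finset.sum_congr rfl fun t ht => if_pos (mem_fiber.mp ht)
  · exact fun t ht => if_neg (mt mem_fiber.mpr ht)

theorem poissonOrderK_nonneg (hlam : 0 ≤ lam) (x : ℤ) : 0 ≤ poissonOrderK k lam x := by
  rw [poissonOrderK_eq_sum_fiber]
  exact Finset.sum_nonneg fun t _ => mass_nonneg hlam t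

theorem poissonOrderK_of_neg {x : ℤ} (hx : x < 0) : poissonOrderK k lam x = 0 := by
  rw [poissonOrderK_eq_sum_fiber, Finset.sum_eq_zero]
  intro t ht
  have := mem_fiber.mp ht
  omega

theorem poissonOrderK_pos (hk : 0 < k) (hlam : 0 < lam) {x : ℤ} (hx : 0 ≤ x) :
    0 < poissonOrderK k lam x := by
  rw [poissonOrderK_eq_sum_fiber]
  refine Finset.sum_pos' (fun t _ => (mass_pos hlam t).le)
    ⟨Pi.single ⟨0, hk⟩ x.toNat, mem_fiber.mpr ?_, mass_pos hlam _⟩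
  simp [weight, Pi.single_apply, hx]

theorem weight_update_succ (t : Fin k → ℕ) (i : Fin k) :
    weight (Function.update t i (t i + 1)) = weight t + (i + 1) := by
  have := sum_apply_update_add (fun (j : Fin k) n => ((j : ℕ) + 1) * n) t i (t i + 1)
  rw [mul_add_one] at this
  unfold weight
  omega

theorem mass_update_succ (t : Fin k → ℕ) (i : Fin k) :
    (t i + 1) * mass k lam (Function.update t i (t i + 1)) = lam * mass k lam t := by
  have hsum := sum_apply_update_add (fun _ n => n) t i (t i + 1)
  have hprod := prod_apply_update_mul (fun _ n => ((n.factorial : ℕ) : ℝ)) t i (t i + 1)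
  have hfac : ∀ n : ℕ, ((n.factorial : ℕ) : ℝ) ≠ 0 := fun n => by positivity
  rw [Nat.factorial_succ, Nat.cast_mul] at hprod
  have hprod' : ∏ j, ((Function.update t i (t i + 1) j).factorial : ℝ)
      = (t i + 1) * ∏ j, ((t j).factorial : ℝ) := by
    apply mul_right_cancel₀ (hfac (t i))
    rw [hprod]
    push_cast
    ring
  have hsum' : ∑ j, Function.update t i (t i + 1) j = ∑ j, t j + 1 := by omega
  have hprod_ne : (∏ j, ((t j).factorial : ℝ)) ≠ 0 :=
    Finset.prod_ne_zero_iff.mpr fun j _ => hfac _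
  unfold mass
  rw [hprod', hsum', pow_succ]
  field_simp

theorem mul_poissonOrderK_sub (i : Fin k) (x : ℤ) :
    lam * poissonOrderK k lam (x - ((i : ℕ) + 1))
      = ∑ s ∈ fiber k x, (s i : ℝ) * mass k lam s := by
  have hsupp : ∑ s ∈ fiber k x with s i ≠ 0, (s i : ℝ) * mass k lam s
      = ∑ s ∈ fiber k x, (s i : ℝ) * mass k lam s :=
    Finset.sum_filter_of_ne fun s _ h his => by simp [his] at h
  rw [← hsupp, poissonOrderK_eq_sum_fiber, Finset.mul_sum]
  refine Finset.sum_nbij' (fun t => Function.update t i (t i + 1))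
    (fun s => Function.update s i (s i - 1)) ?_ ?_ ?_ ?_ ?_
  · intro t ht
    rw [Finset.mem_filter, mem_fiber, weight_update_succ, Function.update_self]
    have := mem_fiber.mp ht
    push_cast at this ⊢
    omega
  · intro s hs
    rw [Finset.mem_filter, mem_fiber] at hs
    have hw := weight_update_succ (Function.update s i (s i - 1)) i
    rw [update_pred_succ hs.2] at hw
    rw [mem_fiber]
    omega
  · intro t _
    simp
  · intro s hs
    exact update_pred_succ (Finset.mem_filter.mp hs).2
  · intro t _
    rw [Function.update_self, ← mass_update_succ t i]
    push_cast
    ring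

theorem intCast_mul_poissonOrderK (x : ℤ) :
    (x : ℝ) * poissonOrderK k lam x
      = lam * ∑ j ∈ Finset.range k, ((j : ℝ) + 1) * poissonOrderK k lam (x - (j + 1)) := by
  rw [Finset.mul_sum, ← Fin.sum_univ_eq_sum_range
    (fun j => lam * (((j : ℝ) + 1) * poissonOrderK k lam (x - (j + 1))))]
  simp_rw [mul_left_comm lam, mul_poissonOrderK_sub, Finset.mul_sum]
  rw [Finset.sum_comm, poissonOrderK_eq_sum_fiber, Finset.mul_sum]
  refine Finset.sum_congr rfl fun s hs => ?_
  have hweight : ((weight s : ℕ) : ℝ) = x := by exact_mod_cast mem_fiber.mp hs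
  rw [← hweight, weight, Nat.cast_sum, Finset.sum_mul]
  push_cast
  exact Finset.sum_congr rfl fun i _ => by ring

theorem deltaOrderK_of_neg {x : ℤ} (hx : x < 0) : deltaOrderK k lam x = 0 := by
  rw [deltaOrderK, poissonOrderK_of_neg hx, poissonOrderK_of_neg (by omega), sub_zero]

theorem deltaOrderK_zero : deltaOrderK k lam 0 = poissonOrderK k lam 0 := by
  rw [deltaOrderK, poissonOrderK_of_neg (by omega : (0 : ℤ) - 1 < 0), sub_zero]

theorem sum_range_deltaOrderK (x : ℤ) (n : ℕ) :
    ∑ j ∈ Finset.range n, deltaOrderK k lam (x - j)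
      = poissonOrderK k lam x - poissonOrderK k lam (x - n) := by
  have := Finset.sum_range_sub' (fun j : ℕ => poissonOrderK k lam (x - j)) n
  simp only [Nat.cast_zero, sub_zero, Nat.cast_succ, ← sub_sub] at this
  exact this

theorem intCast_mul_deltaOrderK (x : ℤ) :
    (x : ℝ) * deltaOrderK k lam x
      = lam * ∑ j ∈ Finset.range k, ((j : ℝ) + 1) * deltaOrderK k lam (x - (j + 1))
        - poissonOrderK k lam (x - 1) := by
  have hx := intCast_mul_poissonOrderK (k := k) (lam := lam) x
  have hx₁ := intCast_mul_poissonOrderK (k := k) (lam := lam) (x - 1)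
  simp only [deltaOrderK, mul_sub, Finset.sum_sub_distrib, sub_right_comm _ (1 : ℤ)] at hx₁ ⊢
  push_cast at hx₁
  linear_combination hx - hx₁

theorem natCast_mul_deltaOrderK_of_le {x : ℕ} (hxk : x ≤ k) :
    (x : ℝ) * deltaOrderK k lam x
      = ∑ j ∈ Finset.range x, (lam * (j + 1) - 1) * deltaOrderK k lam (x - (j + 1)) := by
  have hvanish : ∀ j ∈ Finset.range k, j ∉ Finset.range x →
      ((j : ℝ) + 1) * deltaOrderK k lam (x - (j + 1)) = 0 := fun j _ hj => by
    rw [Finset.mem_range, not_lt] at hj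
    rw [deltaOrderK_of_neg (by omega), mul_zero]
  have htel := sum_range_deltaOrderK (k := k) (lam := lam) (x - 1) x
  rw [poissonOrderK_of_neg (x := x - 1 - x) (by omega), sub_zero] at htel
  have := intCast_mul_deltaOrderK (k := k) (lam := lam) x
  rw [← Finset.sum_subset (Finset.range_subset_range.mpr hxk) hvanish, ← htel] at this
  push_cast at this ⊢
  rw [this, Finset.mul_sum, ← Finset.sum_sub_distrib]
  exact Finset.sum_congr rfl fun j _ => by ring_nf

theorem deltaOrderK_one (hk : 0 < k) : deltaOrderK k lam 1 = (lam - 1) * poissonOrderK k lam 0 := by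
  simpa [deltaOrderK_zero] using natCast_mul_deltaOrderK_of_le (k := k) (lam := lam) (x := 1) hk

def tailSum (k i : ℕ) : ℝ := ∑ j ∈ Finset.Ico i k, ((j : ℝ) + 1)

theorem tailSum_zero (k : ℕ) : tailSum k 0 = k * (k + 1) / 2 := by
  induction k with
  | zero => simp [tailSum]
  | succ n ih =>
    rw [tailSum, Finset.sum_Ico_succ_top (Nat.zero_le n), ← tailSum, ih]
    push_cast
    ring

theorem one_lt_tailSum_zero (hk : 2 ≤ k) : 1 < tailSum k 0 := by
  rw [tailSum_zero]
  have : (2 : ℝ) ≤ k := by exact_mod_cast hk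
  nlinarith

theorem tailSum_eq_add {i : ℕ} (hi : i < k) : tailSum k i = (i + 1) + tailSum k (i + 1) := by
  rw [tailSum, Finset.sum_eq_sum_Ico_succ_bot hi, tailSum]

theorem tailSum_pred (hk : 0 < k) : tailSum k (k - 1) = k := by
  rw [tailSum_eq_add (by omega), Nat.sub_add_cancel hk, tailSum, Finset.Ico_self, Finset.sum_empty]
  push_cast [Nat.cast_sub hk]
  ring

theorem tailSum_le_tailSum_zero (i : ℕ) : tailSum k i ≤ tailSum k 0 :=
  Finset.sum_le_sum_of_subset_of_nonneg (Finset.Ico_subset_Ico (Nat.zero_le i) le_rfl)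
    fun j _ _ => by positivity

theorem sub_mul_poissonOrderK (x : ℤ) :
    (lam * tailSum k 0 - x) * poissonOrderK k lam x
      = lam * ∑ i ∈ Finset.range k, tailSum k i * deltaOrderK k lam (x - i) := by
  have hswap : ∑ i ∈ Finset.range k, tailSum k i * deltaOrderK k lam (x - i)
      = ∑ j ∈ Finset.range k, ((j : ℝ) + 1)
          * (poissonOrderK k lam x - poissonOrderK k lam (x - (j + 1))) := by
    simp_rw [tailSum, Finset.sum_mul, Finset.range_eq_Ico, Finset.sum_Ico_Ico_comm,
      ← Finset.range_eq_Ico, ← Finset.mul_sum, sum_range_deltaOrderK]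
    push_cast
    rfl
  rw [hswap, sub_mul, intCast_mul_poissonOrderK]
  simp_rw [mul_sub, Finset.sum_sub_distrib, ← Finset.sum_mul, tailSum, ← Finset.range_eq_Ico]
  ring

theorem tailSum_zero_mul_mul_deltaOrderK (hk : 0 < k) (x : ℤ) :
    tailSum k 0 * x * deltaOrderK k lam x
      = (lam * tailSum k 0 - x - tailSum k 0 + 1) * poissonOrderK k lam (x - 1)
        + lam * ∑ i ∈ Finset.range (k - 1), ((tailSum k 0 - 1) * tailSum k i
            - tailSum k 0 * tailSum k (i + 1)) * deltaOrderK k lam (x - 1 - i)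
        + lam * k * (tailSum k 0 - 1) * deltaOrderK k lam (x - k) := by
  obtain ⟨n, rfl⟩ : ∃ n, k = n + 1 := ⟨k - 1, by omega⟩
  have hx := sub_mul_poissonOrderK (k := n + 1) (lam := lam) x
  have hx₁ := sub_mul_poissonOrderK (k := n + 1) (lam := lam) (x - 1)
  have hlast : tailSum (n + 1) n = n + 1 := by
    simpa using tailSum_pred (k := n + 1) n.succ_pos
  have hshift : ∀ i : ℕ, x - (i + 1 : ℕ) = x - 1 - i := fun i => by push_cast; ring
  rw [Finset.sum_range_succ', Nat.cast_zero, sub_zero] at hx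
  simp only [hshift] at hx
  rw [Finset.sum_range_succ, hlast, ← hshift] at hx₁
  have hP : poissonOrderK (n + 1) lam x
      = poissonOrderK (n + 1) lam (x - 1) + deltaOrderK (n + 1) lam x := by
    rw [deltaOrderK]; ring
  rw [hP] at hx
  simp only [Nat.add_sub_cancel, sub_mul, mul_assoc, one_mul, Finset.sum_sub_distrib,
    ← Finset.mul_sum]
  push_cast at hx hx₁ ⊢
  linear_combination (-tailSum (n + 1) 0) * hx + (tailSum (n + 1) 0 - 1) * hx₁

theorem tailSum_zero_mul_tailSum_succ_le {i : ℕ} (hi : i < k) :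
    tailSum k 0 * tailSum k (i + 1) ≤ (tailSum k 0 - 1) * tailSum k i := by
  have hle := tailSum_le_tailSum_zero (k := k) i
  have hsucc := tailSum_eq_add hi
  have hi0 : (0 : ℝ) ≤ i := i.cast_nonneg
  have hK0 : 0 ≤ tailSum k 0 := by rw [tailSum_zero]; positivity
  nlinarith

theorem deltaOrderK_nonneg_of_le_one (hk : 0 < k) (hlam : 1 ≤ lam) {x : ℤ} (hx : x ≤ 1) :
    0 ≤ deltaOrderK k lam x := by
  have hP := poissonOrderK_nonneg (k := k) (by linarith : 0 ≤ lam) 0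
  rcases lt_trichotomy x 0 with hneg | rfl | hpos
  · exact (deltaOrderK_of_neg hneg).ge
  · rwa [deltaOrderK_zero]
  · rw [show x = 1 by omega, deltaOrderK_one hk]
    exact mul_nonneg (by linarith) hP

theorem deltaOrderK_pos_of_le (hlam : 1 ≤ lam) {x : ℕ} (hx : 2 ≤ x) (hxk : x ≤ k)
    (hprev : ∀ y : ℤ, y < x → 0 ≤ deltaOrderK k lam y) : 0 < deltaOrderK k lam x := by
  have hsum := natCast_mul_deltaOrderK_of_le (lam := lam) hxk
  obtain ⟨n, rfl⟩ : ∃ n, x = n + 1 := ⟨x - 1, by omega⟩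
  rw [Finset.sum_range_succ, show ((n + 1 : ℕ) : ℤ) - (n + 1) = 0 by push_cast; ring,
    deltaOrderK_zero] at hsum
  have hrest : 0 ≤ ∑ j ∈ Finset.range n,
      (lam * (j + 1) - 1) * deltaOrderK k lam (↑(n + 1) - (j + 1)) :=
    Finset.sum_nonneg fun j _ =>
      mul_nonneg (by nlinarith [j.cast_nonneg (α := ℝ)]) (hprev _ (by omega))
  have hlast : 0 < (lam * (n + 1) - 1) * poissonOrderK k lam 0 := by
    have hn : (1 : ℝ) ≤ n := by exact_mod_cast (by omega : 1 ≤ n)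
    exact mul_pos (by nlinarith) (poissonOrderK_pos (by omega) (by linarith) le_rfl)
  have hprod : 0 < ((n + 1 : ℕ) : ℝ) * deltaOrderK k lam (n + 1 : ℕ) := by
    rw [hsum]
    exact add_pos_of_nonneg_of_pos hrest hlast
  exact pos_of_mul_pos_right hprod (by positivity)

theorem deltaOrderK_pos_of_lt (hk : 2 ≤ k) (hlam : 0 < lam) {x : ℕ} (hkx : k < x)
    (hx : (x : ℝ) ≤ lam * tailSum k 0 - tailSum k 0 + 1)
    (hprev : ∀ y : ℤ, y < x → 0 ≤ deltaOrderK k lam y)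
    (hxk : 0 < deltaOrderK k lam (x - k)) :
    0 < deltaOrderK k lam x := by
  have hid := tailSum_zero_mul_mul_deltaOrderK (lam := lam) (by omega : 0 < k) x
  have hK := one_lt_tailSum_zero hk
  have hfirst : 0 ≤ (lam * tailSum k 0 - x - tailSum k 0 + 1) * poissonOrderK k lam (x - 1) :=
    mul_nonneg (by linarith) (poissonOrderK_nonneg hlam.le _)
  have hmiddle : 0 ≤ ∑ i ∈ Finset.range (k - 1), ((tailSum k 0 - 1) * tailSum k i
      - tailSum k 0 * tailSum k (i + 1)) * deltaOrderK k lam (x - 1 - i) :=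
    Finset.sum_nonneg fun i hi => mul_nonneg
      (sub_nonneg.mpr (tailSum_zero_mul_tailSum_succ_le (by simp at hi; omega)))
      (hprev _ (by omega))
  have hlast : 0 < lam * k * (tailSum k 0 - 1) * deltaOrderK k lam (x - k) := by
    have : (0 : ℝ) < k := by exact_mod_cast (by omega : 0 < k)
    have : 0 < tailSum k 0 - 1 := by linarith
    positivity
  have hxpos : (0 : ℝ) < tailSum k 0 * (x : ℤ) :=
    mul_pos (by linarith) (by exact_mod_cast (by omega : 0 < x))
  have hprod : 0 < tailSum k 0 * (x : ℤ) * deltaOrderK k lam x := by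
    rw [hid]
    exact add_pos_of_nonneg_of_pos (add_nonneg hfirst (mul_nonneg hlam.le hmiddle)) hlast
  exact pos_of_mul_pos_right hprod hxpos.le

theorem deltaOrderK_pos (hk : 2 ≤ k) (hlam : 1 ≤ lam) (x : ℕ) (hx : 2 ≤ x)
    (hxk : x ≤ k ∨ (x : ℝ) ≤ lam * tailSum k 0 - tailSum k 0 + 1) :
    0 < deltaOrderK k lam x := by
  induction x using Nat.strong_induction_on with
  | _ x ih =>
  have hprev : ∀ y : ℤ, y < x → 0 ≤ deltaOrderK k lam y := fun y hy => by
    rcases le_or_gt y 1 with hy1 | hy1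
    · exact deltaOrderK_nonneg_of_le_one (by omega) hlam hy1
    · lift y to ℕ using by omega
      refine (ih y (by omega) (by omega) ?_).le
      refine hxk.imp (fun h => by omega) (fun h => le_trans ?_ h)
      exact_mod_cast (by omega : y ≤ x)
  rcases le_or_gt x k with hle | hlt
  · exact deltaOrderK_pos_of_le hlam hx hle hprev
  have hxK : (x : ℝ) ≤ lam * tailSum k 0 - tailSum k 0 + 1 := hxk.resolve_left (by omega)
  refine deltaOrderK_pos_of_lt hk (by linarith) hlt hxK hprev ?_
  obtain hx1 | hx2 : x = k + 1 ∨ k + 2 ≤ x := by omega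
  · subst hx1
    have hK := one_lt_tailSum_zero hk
    have hk0 : (0 : ℝ) < k := by exact_mod_cast (by omega : 0 < k)
    push_cast at hxK
    have hlam1 : 1 < lam := by nlinarith
    rw [show ((k + 1 : ℕ) : ℤ) - k = 1 by push_cast; ring, deltaOrderK_one (by omega)]
    exact mul_pos (by linarith) (poissonOrderK_pos (by omega) (by linarith) le_rfl)
  · have := ih (x - k) (by omega) (by omega)
      (Or.inr (le_trans (by exact_mod_cast Nat.sub_le x k) hxK))
    rwa [Nat.cast_sub hlt.le] at this

theorem exists_poissonOrderK_gt (hk : 2 ≤ k) {m : ℕ}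
    (hm : (m : ℝ) + tailSum k 0 ≤ lam * tailSum k 0) :
    ∃ x : ℕ, poissonOrderK k lam m < poissonOrderK k lam x := by
  have hlam : 1 ≤ lam := by nlinarith [one_lt_tailSum_zero hk, m.cast_nonneg (α := ℝ)]
  rcases Nat.eq_zero_or_pos m with rfl | hm0
  · have h₁ : poissonOrderK k lam 0 ≤ poissonOrderK k lam 1 := by
      simpa [deltaOrderK] using deltaOrderK_nonneg_of_le_one (k := k) (by omega) hlam le_rfl
    have h₂ : poissonOrderK k lam 1 < poissonOrderK k lam 2 := by
      simpa [deltaOrderK] using deltaOrderK_pos hk hlam 2 le_rfl (Or.inl hk)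
    exact ⟨2, by push_cast; linarith⟩
  · refine ⟨m + 1, ?_⟩
    simpa [deltaOrderK] using
      deltaOrderK_pos hk hlam (m + 1) (by omega) (Or.inr (by push_cast; linarith))

theorem natCast_add_tailSum_zero_le {m : ℕ}
    (hm : (m : ℤ) < ⌊lam * k * (k + 1) / 2⌋ - k * (k + 1) / 2 + 1) :
    (m : ℝ) + tailSum k 0 ≤ lam * tailSum k 0 := by
  have hK : (((k : ℤ) * (k + 1) / 2 : ℤ) : ℝ) = tailSum k 0 := by
    rw [tailSum_zero, Int.cast_div (Int.even_mul_succ_self k).two_dvd (by norm_num)]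
    push_cast
    ring
  have hfloor : lam * k * (k + 1) / 2 = lam * tailSum k 0 := by
    rw [tailSum_zero]
    ring
  have := Int.le_floor.mp (show (m : ℤ) + k * (k + 1) / 2 ≤ ⌊lam * tailSum k 0⌋ by
    rw [← hfloor]; omega)
  rwa [Int.cast_add, hK, Int.cast_natCast] at this

end PoissonOrderK

theorem poissonOrderK_mode_lower_bound_general (k : ℕ) (hk : 2 ≤ k) (lam : ℝ)
    (m : ℕ) (hm : ∀ x : ℕ, poissonOrderK k lam (x : ℤ) ≤ poissonOrderK k lam (m : ℤ)) :
    (m : ℤ) ≥ ⌊lam * k * (k + 1) / 2⌋ - k * (k + 1) / 2 + 1 := by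
  by_contra! hlt
  obtain ⟨x, hx⟩ :=
    PoissonOrderK.exists_poissonOrderK_gt hk (PoissonOrderK.natCast_add_tailSum_zero_le hlt)
  exact (hm x).not_gt hx

theorem poissonOrderK_mode_lower_bound (k : ℕ) (hk : 2 ≤ k) (lam : ℝ) (hlam : 0 < lam)
    (m : ℕ) (hm : ∀ x : ℕ, poissonOrderK k lam (x : ℤ) ≤ poissonOrderK k lam (m : ℤ)) :
    (m : ℤ) ≥ ⌊lam * k * (k + 1) / 2⌋ - k * (k + 1) / 2 + 1 :=
  poissonOrderK_mode_lower_bound_general k hk lam m hm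
end

section
/- For the Poisson distribution of order k with λ = 1, P_0 = P_1 = e^{−k} and P_2 = (3/2)e^{−k}; in particular P_1 < P_2 for k ≥ 2. -/
open scoped BigOperators
open Real

/-!
In `x₁ + 2x₂ + ⋯ + k x_k = x` every `x_i` with `i > x` must vanish, so for `x ≤ 2` the series
defining `f_k(x; λ)` has only the terms at `0` (for `x = 0`), at `e₁` (for `x = 1`), and at
`2e₁` and `e₂` (for `x = 2`). This gives `f_k(0; λ) = e^{-kλ}`, `f_k(1; λ) = λ e^{-kλ}` and
`f_k(2; λ) = (λ²/2 + λ) e^{-kλ}`.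
-/

open Finset

namespace PoissonOrderK

variable {k : ℕ}

/-- `x₁ + 2x₂ + ⋯ + k x_k`, where `t i` stands for `x_{i+1}`. -/
def weightedSum (t : Fin k → ℕ) : ℕ := ∑ i : Fin k, ((i : ℕ) + 1) * t i

noncomputable def term (lam : ℝ) (t : Fin k → ℕ) : ℝ :=
  exp (-(k * lam)) * lam ^ (∑ i, t i) / ∏ i, ((t i).factorial : ℝ)

lemma mul_le_weightedSum (t : Fin k → ℕ) (i : Fin k) : ((i : ℕ) + 1) * t i ≤ weightedSum t :=
  single_le_sum (f := fun i : Fin k => ((i : ℕ) + 1) * t i) (fun _ _ => Nat.zero_le _)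
    (mem_univ i)

lemma eq_zero_of_weightedSum_lt {t : Fin k → ℕ} {i : Fin k} (hi : weightedSum t < (i : ℕ) + 1) :
    t i = 0 := by
  by_contra ht
  have := mul_le_weightedSum t i
  have := Nat.le_mul_of_pos_right ((i : ℕ) + 1) (Nat.pos_of_ne_zero ht)
  omega

lemma weightedSum_single (j : Fin k) (m : ℕ) :
    weightedSum (Pi.single j m) = ((j : ℕ) + 1) * m := by
  simp [weightedSum, Pi.single_apply]

lemma weightedSum_eq_zero_iff {t : Fin k → ℕ} : weightedSum t = 0 ↔ t = 0 := by
  simp [weightedSum, sum_eq_zero_iff, funext_iff]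

lemma eq_single_of_weightedSum_eq_one (hk : 0 < k) {t : Fin k → ℕ} (h : weightedSum t = 1) :
    t = Pi.single ⟨0, hk⟩ 1 := by
  set i₀ : Fin k := ⟨0, hk⟩
  have hzero : ∀ j, j ≠ i₀ → t j = 0 := fun j hj =>
    eq_zero_of_weightedSum_lt (by rw [Ne, Fin.ext_iff] at hj; simp only [i₀] at hj; omega)
  have hi₀ : t i₀ = 1 := by
    rw [weightedSum, sum_eq_single i₀ (fun j _ hj => by rw [hzero j hj, mul_zero])
      (by simp)] at h
    simpa [i₀] using h
  funext j
  by_cases hj : j = i₀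
  · simp [hj, hi₀]
  · simp [hzero j hj, hj]

lemma eq_single_of_weightedSum_eq_two (hk : 1 < k) {t : Fin k → ℕ} (h : weightedSum t = 2) :
    t = Pi.single ⟨0, Nat.zero_lt_of_lt hk⟩ 2 ∨ t = Pi.single ⟨1, hk⟩ 1 := by
  set i₀ : Fin k := ⟨0, Nat.zero_lt_of_lt hk⟩
  set i₁ : Fin k := ⟨1, hk⟩
  have hne : i₀ ≠ i₁ := by simp [i₀, i₁, Fin.ext_iff]
  have hzero : ∀ j, j ≠ i₀ → j ≠ i₁ → t j = 0 := fun j h₀ h₁ => eq_zero_of_weightedSum_lt (by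
    rw [Ne, Fin.ext_iff] at h₀ h₁; simp only [i₀, i₁] at h₀ h₁; omega)
  have hsum : t i₀ + 2 * t i₁ = 2 := by
    rw [weightedSum, sum_eq_add i₀ i₁ hne
      (fun j _ hj => by rw [hzero j hj.1 hj.2, mul_zero]) (by simp) (by simp)] at h
    simpa [i₀, i₁] using h
  obtain h₁ | h₁ : t i₁ = 0 ∨ t i₁ = 1 := by omega
  · left
    funext j
    by_cases hj₀ : j = i₀ <;> by_cases hj₁ : j = i₁ <;> simp_all
  · right
    funext j
    by_cases hj₀ : j = i₀ <;> by_cases hj₁ : j = i₁ <;> simp_all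

lemma term_single (lam : ℝ) (j : Fin k) (m : ℕ) :
    term lam (Pi.single j m) = exp (-(k * lam)) * lam ^ m / m.factorial := by
  rw [term, prod_eq_single j (fun i _ hi => by simp [hi]) (by simp)]
  simp

end PoissonOrderK

open PoissonOrderK

lemma poissonOrderK_eq_sum {k : ℕ} {lam : ℝ} {x : ℤ} (s : Finset (Fin k → ℕ))
    (hs : ∀ t, (weightedSum t : ℤ) = x → t ∈ s) :
    poissonOrderK k lam x = ∑ t ∈ s, if (weightedSum t : ℤ) = x then term lam t else 0 :=
  tsum_eq_sum fun t ht => if_neg (mt (hs t) ht)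

lemma poissonOrderK_zero (k : ℕ) (lam : ℝ) : poissonOrderK k lam 0 = exp (-(k * lam)) := by
  rw [poissonOrderK_eq_sum {0} fun t ht => mem_singleton.2 <|
    weightedSum_eq_zero_iff.1 (by exact_mod_cast ht)]
  simp [weightedSum, term]

lemma poissonOrderK_one {k : ℕ} (hk : 0 < k) (lam : ℝ) :
    poissonOrderK k lam 1 = exp (-(k * lam)) * lam := by
  rw [poissonOrderK_eq_sum {Pi.single ⟨0, hk⟩ 1} fun t ht => mem_singleton.2 <|
    eq_single_of_weightedSum_eq_one hk (by exact_mod_cast ht)]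
  rw [sum_singleton, weightedSum_single, if_pos (by simp), term_single]
  simp

lemma poissonOrderK_two {k : ℕ} (hk : 1 < k) (lam : ℝ) :
    poissonOrderK k lam 2 = exp (-(k * lam)) * (lam ^ 2 / 2 + lam) := by
  have hne : (Pi.single ⟨0, Nat.zero_lt_of_lt hk⟩ 2 : Fin k → ℕ) ≠ Pi.single ⟨1, hk⟩ 1 :=
    fun h => by simpa using congrFun h ⟨1, hk⟩
  rw [poissonOrderK_eq_sum {Pi.single ⟨0, Nat.zero_lt_of_lt hk⟩ 2, Pi.single ⟨1, hk⟩ 1}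
    fun t ht => by simpa using eq_single_of_weightedSum_eq_two hk (by exact_mod_cast ht)]
  rw [sum_pair hne, weightedSum_single, weightedSum_single, if_pos (by simp), if_pos (by simp),
    term_single, term_single]
  simp only [Nat.factorial_two, Nat.cast_ofNat, pow_one, Nat.factorial_one, Nat.cast_one, div_one]
  ring

theorem poissonOrderK_lambda_one (k : ℕ) (hk : 2 ≤ k) :
    poissonOrderK k 1 0 = Real.exp (-(k : ℝ))
    ∧ poissonOrderK k 1 1 = Real.exp (-(k : ℝ))
    ∧ poissonOrderK k 1 2 = 3 / 2 * Real.exp (-(k : ℝ))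
    ∧ poissonOrderK k 1 1 < poissonOrderK k 1 2 := by
  have hP1 : poissonOrderK k 1 1 = exp (-(k : ℝ)) := by simp [poissonOrderK_one (by omega : 0 < k)]
  have hP2 : poissonOrderK k 1 2 = 3 / 2 * exp (-(k : ℝ)) := by
    rw [poissonOrderK_two (by omega : 1 < k)]
    ring_nf
  refine ⟨by simp [poissonOrderK_zero], hP1, hP2, ?_⟩
  rw [hP1, hP2]
  linarith [exp_pos (-(k : ℝ))]
end
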